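/- arXiv:2203.02614 — 2 statements merged into one kernel-verified Lean document; each statement's English description precedes it below -/
import Mathlib

section
/- Monotonicity of the forgetting process in its initial set: if the process is run with the same input sequence x_1,...,x_n from initial sets T_1 and T_1 ∪ T_2 (with T_1, T_2 disjoint finite subsets of [0,1]), then at every time ℓ ≤ n and for every x ∈ [0,1], the set of elements in [0,x] present in the memory of the first process is contained in that of the second process, and the difference of their cardinalities is at most |T_2|. -/
open MeasureTheory ProbabilityTheory Finset

noncomputable section

/-- One step of the forgetting process: the new point `x` joins `S`; if `x` is strictly
larger than the current minimum of `S`, that minimum is removed. -/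
def forgetStep (S : Finset ℝ) (x : ℝ) : Finset ℝ :=
  if h : S.Nonempty then
    if S.min' h < x then insert x (S.erase (S.min' h)) else insert x S
  else insert x S

/-- The memory after `n` steps, starting from the set `T`, with inputs `xs 0, xs 1, …`. -/
def forgetMem (T : Finset ℝ) (xs : ℕ → ℝ) : ℕ → Finset ℝ
  | 0 => T
  | n + 1 => forgetStep (forgetMem T xs n) (xs n)

/-- `sCount xs x ℓ` : number of elements of the memory lying in `[0, x]` after `ℓ` steps,
starting from `S = {0}`. -/
def sCount (xs : ℕ → ℝ) (x : ℝ) (ℓ : ℕ) : ℕ :=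
  ((forgetMem {0} xs ℓ).filter (· ≤ x)).card

/-- The branching weight `W(z,n) = Σ_{x ∈ S(z,n)} 1/(1-x)`, the sum over memory elements
strictly below `z` at time `n`. -/
def Wproc (xs : ℕ → ℝ) (z : ℝ) (n : ℕ) : ℝ :=
  ∑ x ∈ (forgetMem {0} xs n).filter (· < z), 1 / (1 - x)

/-- `Z(z,n) = Σ_{k=1}^n W(z,k)·1{W(z,k-1)=0}`. -/
def Zproc (xs : ℕ → ℝ) (z : ℝ) (n : ℕ) : ℝ :=
  ∑ k ∈ Finset.range n, if Wproc xs z k = 0 then Wproc xs z (k + 1) else 0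

/-- `X(z,n) = W(z,n) - Z(z,n)`. -/
def Xproc (xs : ℕ → ℝ) (z : ℝ) (n : ℕ) : ℝ :=
  Wproc xs z n - Zproc xs z n

/-- the minimum of the memory at time `n` (with junk value `0` if the memory were empty). -/
def mminProc (xs : ℕ → ℝ) (n : ℕ) : ℝ :=
  WithTop.untopD 0 (forgetMem {0} xs n).min

/-- the critical point `z₀ = 1 - 1/e`. -/
def critPoint : ℝ := 1 - (Real.exp 1)⁻¹

/-- The σ-algebra generated by the first `n` inputs `X 0, …, X (n-1)`. -/
def natSigma {Ω : Type*} [MeasurableSpace Ω] (X : ℕ → Ω → ℝ) (n : ℕ) : MeasurableSpace Ω :=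
  ⨆ i ∈ Finset.range n, MeasurableSpace.comap (X i) inferInstance

/-- The natural filtration `F_n = σ(x_1, …, x_n)` of the input sequence. -/
def natFilt {Ω : Type*} [m0 : MeasurableSpace Ω] (X : ℕ → Ω → ℝ)
    (hX : ∀ i, Measurable (X i)) : Filtration ℕ m0 where
  seq n := natSigma X n
  mono' n m hnm := biSup_mono fun i hi => Finset.mem_range.2 ((Finset.mem_range.1 hi).trans_le hnm)
  le' n := iSup₂_le fun i _ => measurable_iff_comap_le.1 (hX i)

/-- The input sequence is i.i.d. uniform on `[0,1]`. -/
def IsUnifIID {Ω : Type*} [MeasurableSpace Ω] (μ : Measure Ω) (X : ℕ → Ω → ℝ) : Prop :=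
  (∀ i, Measurable (X i)) ∧
    iIndepFun X μ ∧
    ∀ i, Measure.map (X i) μ = volume.restrict (Set.Icc (0 : ℝ) 1)


/-! A run from a larger initial set keeps a larger memory: the new point enters both memories,
and when the smaller one drops its minimum `m₁`, the larger one drops its own minimum `m₂ ≤ m₁`,
which is either `m₁` itself or an element missing from the smaller memory. The surplus never
grows: the new point lands in both memories, and the larger one loses an element whenever the
smaller one does. -/

lemma Finset.card_filter_sub_card_filter_le {α : Type*} {s t : Finset α} (h : s ⊆ t)
    (p : α → Prop) [DecidablePred p] :
    #(t.filter p) - #(s.filter p) ≤ #t - #s := by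
  have := card_le_card (filter_subset_filter (fun a => ¬p a) h)
  have := card_filter_add_card_filter_not (s := s) p
  have := card_filter_add_card_filter_not (s := t) p
  omega

section forgetStep

variable {S S₁ S₂ : Finset ℝ} {x y : ℝ}

lemma forgetStep_of_forall_le (h : ∀ z ∈ S, x ≤ z) : forgetStep S x = insert x S := by
  unfold forgetStep
  split_ifs with hS hlt
  · exact absurd (h _ (S.min'_mem hS)) hlt.not_ge
  all_goals rfl

lemma forgetStep_of_lt (hy : y ∈ S) (hyx : y < x) :
    forgetStep S x = (insert x S).erase (S.min' ⟨y, hy⟩) := by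
  have hmin : S.min' ⟨y, hy⟩ < x := (S.min'_le y hy).trans_lt hyx
  rw [forgetStep, dif_pos ⟨y, hy⟩, if_pos hmin, erase_insert_of_ne hmin.ne']

lemma card_forgetStep_add_one_of_lt (hy : y ∈ S) (hyx : y < x) :
    #(forgetStep S x) + 1 = #(insert x S) := by
  rw [forgetStep_of_lt hy hyx]
  exact card_erase_add_one (mem_insert_of_mem (S.min'_mem _))

lemma mem_forgetStep :
    y ∈ forgetStep S x ↔ y = x ∨ y ∈ S ∧ (x ≤ y ∨ ∃ z ∈ S, z < y) := by
  by_cases hrem : ∃ z ∈ S, z < x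
  · obtain ⟨z, hz, hzx⟩ := hrem
    have hmin_mem : S.min' ⟨z, hz⟩ ∈ S := S.min'_mem _
    have hmin_lt : S.min' ⟨z, hz⟩ < x := (S.min'_le z hz).trans_lt hzx
    rw [forgetStep_of_lt hz hzx, mem_erase, mem_insert]
    constructor
    · rintro ⟨hne, rfl | hyS⟩
      · exact .inl rfl
      · exact .inr ⟨hyS, .inr ⟨_, hmin_mem, lt_of_le_of_ne (S.min'_le y hyS) (Ne.symm hne)⟩⟩
    · rintro (rfl | ⟨hyS, hxy | ⟨w, hw, hwy⟩⟩)
      · exact ⟨hmin_lt.ne', .inl rfl⟩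
      · exact ⟨(hmin_lt.trans_le hxy).ne', .inr hyS⟩
      · exact ⟨((S.min'_le w hw).trans_lt hwy).ne', .inr hyS⟩
  · push Not at hrem
    rw [forgetStep_of_forall_le hrem, mem_insert]
    constructor
    · rintro (rfl | hyS)
      · exact .inl rfl
      · exact .inr ⟨hyS, .inl (hrem y hyS)⟩
    · rintro (rfl | ⟨hyS, -⟩)
      exacts [.inl rfl, .inr hyS]

lemma forgetStep_subset_insert : forgetStep S x ⊆ insert x S := fun y hy => by
  rcases mem_forgetStep.1 hy with rfl | ⟨hyS, -⟩
  exacts [mem_insert_self _ _, mem_insert_of_mem hyS]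

lemma forgetStep_mono (h : S₁ ⊆ S₂) : forgetStep S₁ x ⊆ forgetStep S₂ x := fun y hy => by
  rw [mem_forgetStep] at hy ⊢
  rcases hy with rfl | ⟨hyS, hxy | ⟨z, hz, hzy⟩⟩
  exacts [.inl rfl, .inr ⟨h hyS, .inl hxy⟩, .inr ⟨h hyS, .inr ⟨z, h hz, hzy⟩⟩]

lemma card_insert_sub_card_insert_le (h : S₁ ⊆ S₂) :
    #(insert x S₂) - #(insert x S₁) ≤ #S₂ - #S₁ := by
  rw [← card_sdiff_of_subset h, ← card_sdiff_of_subset (insert_subset_insert x h),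
    insert_sdiff_insert]
  exact card_le_card (sdiff_subset_sdiff subset_rfl (subset_insert x S₁))

lemma card_forgetStep_sub_le (h : S₁ ⊆ S₂) :
    #(forgetStep S₂ x) - #(forgetStep S₁ x) ≤ #S₂ - #S₁ := by
  have hins := card_insert_sub_card_insert_le (x := x) h
  by_cases hrem : ∃ y ∈ S₁, y < x
  · obtain ⟨y, hy, hyx⟩ := hrem
    have h₁ := card_forgetStep_add_one_of_lt hy hyx
    have h₂ := card_forgetStep_add_one_of_lt (h hy) hyx
    omega
  · push Not at hrem
    rw [forgetStep_of_forall_le hrem]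
    have := card_le_card (forgetStep_subset_insert (S := S₂) (x := x))
    omega

end forgetStep

section forgetMem

variable {T₁ T₂ : Finset ℝ}

lemma forgetMem_mono (h : T₁ ⊆ T₂) (xs : ℕ → ℝ) (ℓ : ℕ) :
    forgetMem T₁ xs ℓ ⊆ forgetMem T₂ xs ℓ := by
  induction ℓ with
  | zero => exact h
  | succ ℓ ih => exact forgetStep_mono ih

lemma card_forgetMem_sub_le (h : T₁ ⊆ T₂) (xs : ℕ → ℝ) (ℓ : ℕ) :
    #(forgetMem T₂ xs ℓ) - #(forgetMem T₁ xs ℓ) ≤ #T₂ - #T₁ := by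
  induction ℓ with
  | zero => exact le_rfl
  | succ ℓ ih => exact (card_forgetStep_sub_le (forgetMem_mono h xs ℓ)).trans ih

end forgetMem

theorem forgetting_monotone_initial_set_general (T₁ T₂ : Finset ℝ) (xs : ℕ → ℝ) (ℓ : ℕ) (x : ℝ) :
    (forgetMem T₁ xs ℓ).filter (· ≤ x) ⊆ (forgetMem (T₁ ∪ T₂) xs ℓ).filter (· ≤ x) ∧
      ((forgetMem (T₁ ∪ T₂) xs ℓ).filter (· ≤ x)).card
        - ((forgetMem T₁ xs ℓ).filter (· ≤ x)).card ≤ T₂.card := by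
  have hT : T₁ ⊆ T₁ ∪ T₂ := subset_union_left
  have hmem := forgetMem_mono hT xs ℓ
  refine ⟨filter_subset_filter _ hmem, ?_⟩
  calc _ ≤ #(forgetMem (T₁ ∪ T₂) xs ℓ) - #(forgetMem T₁ xs ℓ) :=
        card_filter_sub_card_filter_le hmem _
    _ ≤ #(T₁ ∪ T₂) - #T₁ := card_forgetMem_sub_le hT xs ℓ
    _ ≤ #T₂ := Nat.sub_le_iff_le_add'.2 (card_union_le T₁ T₂)

/-- Monotonicity of the forgetting process in its initial set: running the
process with the same inputs from `T₁` and from `T₁ ∪ T₂` (disjoint finite subsets of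
`[0,1]`), at every time `ℓ ≤ n` and every `x ∈ [0,1]` the memory elements in `[0,x]` of the
first process form a subset of those of the second, and the cardinalities differ by at most
`|T₂|`. -/
theorem forgetting_monotone_initial_set (T₁ T₂ : Finset ℝ) (hdisj : Disjoint T₁ T₂)
    (hT₁ : ↑T₁ ⊆ Set.Icc (0 : ℝ) 1) (hT₂ : ↑T₂ ⊆ Set.Icc (0 : ℝ) 1)
    (xs : ℕ → ℝ) (hxs : ∀ k, xs k ∈ Set.Icc (0 : ℝ) 1)
    (n ℓ : ℕ) (hℓ : ℓ ≤ n) (x : ℝ) (hx : x ∈ Set.Icc (0 : ℝ) 1) :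
    (forgetMem T₁ xs ℓ).filter (· ≤ x) ⊆ (forgetMem (T₁ ∪ T₂) xs ℓ).filter (· ≤ x) ∧
      ((forgetMem (T₁ ∪ T₂) xs ℓ).filter (· ≤ x)).card
        - ((forgetMem T₁ xs ℓ).filter (· ≤ x)).card ≤ T₂.card :=
  forgetting_monotone_initial_set_general T₁ T₂ xs ℓ x
end
end

section
/- Concentration of the memory size: for any x ∈ [0,1], ℓ ≥ 1, and λ > 0, the probability that s(x,ℓ) deviates from its expectation by more than λ√ℓ is at most 2·exp(−λ²/8). -/
open MeasureTheory ProbabilityTheory Finset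

/-!
Changing a single input of the forgetting process changes the final memory by at most two
elements. At the modified step the two runs differ only by the new point and the removed minimum,
and every later common step does not increase `|S \ T|`. So `s(x, ℓ)` is a function of `ℓ`
independent inputs with bounded differences `2`, and McDiarmid's inequality bounds each tail by
`exp (-ε² / (2 · 4ℓ))`. McDiarmid's inequality is proved by induction on the number of
coordinates: averaging out the first coordinate leaves a function with the same bounded
differences, and the deviation from that average is sub-Gaussian with parameter `c²` by
Hoeffding's lemma (the Doob-martingale argument unrolled).
-/

open scoped NNReal

namespace ForgettingProcess

lemma mem_forgetStep_iff {S : Finset ℝ} {x y : ℝ} :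
    y ∈ forgetStep S x ↔ y = x ∨ y ∈ S ∧ (x ≤ y ∨ ∃ z ∈ S, z < y) := by
  unfold forgetStep
  split_ifs with hS hmin
  · simp only [mem_insert, mem_erase]
    constructor
    · rintro (rfl | ⟨hne, hyS⟩)
      · exact .inl rfl
      · refine .inr ⟨hyS, or_iff_not_imp_left.2 fun hxy => ⟨_, S.min'_mem hS, ?_⟩⟩
        exact (S.min'_le y hyS).lt_of_ne (Ne.symm hne)
    · rintro (rfl | ⟨hyS, hxy | ⟨z, hzS, hzy⟩⟩)
      · exact .inl rfl
      · exact .inr ⟨(hmin.trans_le hxy).ne', hyS⟩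
      · exact .inr ⟨((S.min'_le z hzS).trans_lt hzy).ne', hyS⟩
  · simp only [mem_insert]
    refine or_congr_right ⟨fun hyS => ⟨hyS, .inl ?_⟩, And.left⟩
    exact (not_lt.1 hmin).trans (S.min'_le y hyS)
  · simp [Finset.not_nonempty_iff_eq_empty.1 hS]

lemma mem_forgetStep_self (S : Finset ℝ) (x : ℝ) : x ∈ forgetStep S x :=
  mem_forgetStep_iff.2 (.inl rfl)

lemma mem_of_mem_forgetStep_of_ne {S : Finset ℝ} {x y : ℝ} (hy : y ∈ forgetStep S x)
    (hyx : y ≠ x) : y ∈ S :=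
  ((mem_forgetStep_iff.1 hy).resolve_left hyx).1

lemma notMem_forgetStep_iff {S : Finset ℝ} {x y : ℝ} (hyS : y ∈ S) :
    y ∉ forgetStep S x ↔ y < x ∧ ∀ z ∈ S, y ≤ z := by
  simp only [mem_forgetStep_iff, hyS, true_and, not_or, not_le, not_exists, not_and, not_lt]
  exact ⟨And.right, fun h => ⟨h.1.ne, h⟩⟩

/-- An element surviving in `S` but not in `T` lies in `S \ T` unless it is the minimum of `T`;
in that case the minimum of `S` lies in `S \ T` and does not survive, which compensates. -/
lemma card_sdiff_forgetStep_le (S T : Finset ℝ) (x : ℝ) :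
    #(forgetStep S x \ forgetStep T x) ≤ #(S \ T) := by
  have hS_of_mem {a} (ha : a ∈ forgetStep S x \ forgetStep T x) : a ∈ S :=
    mem_of_mem_forgetStep_of_ne (mem_sdiff.1 ha).1
      (ne_of_mem_of_not_mem (mem_forgetStep_self T x) (mem_sdiff.1 ha).2).symm
  have hT_min {a} (ha : a ∈ forgetStep S x \ forgetStep T x) (haT : a ∈ T) :
      a < x ∧ ∀ z ∈ T, a ≤ z :=
    (notMem_forgetStep_iff haT).1 (mem_sdiff.1 ha).2
  by_cases hbT : ∃ b ∈ forgetStep S x \ forgetStep T x, b ∈ T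
  · obtain ⟨b, hb, hbT⟩ := hbT
    obtain ⟨hbx, hb_min⟩ := hT_min hb hbT
    obtain ⟨-, z, hzS, hzb⟩ : b ∈ S ∧ ∃ z ∈ S, z < b := by
      simpa [hbx.ne, not_le.2 hbx] using mem_forgetStep_iff.1 (mem_sdiff.1 hb).1
    set m := S.min' ⟨z, hzS⟩
    have hmb : m < b := (S.min'_le z hzS).trans_lt hzb
    have hm : m ∈ S \ T := mem_sdiff.2 ⟨S.min'_mem _, fun hmT => (hb_min m hmT).not_gt hmb⟩
    have hm_dead : m ∉ forgetStep S x :=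
      (notMem_forgetStep_iff (S.min'_mem _)).2 ⟨hmb.trans hbx, fun y hy => S.min'_le y hy⟩
    have hsub : forgetStep S x \ forgetStep T x ⊆ insert b ((S \ T).erase m) := by
      intro a ha
      rcases eq_or_ne a b with rfl | hab
      · exact mem_insert_self _ _
      refine mem_insert_of_mem (mem_erase.2 ⟨?_, mem_sdiff.2 ⟨hS_of_mem ha, fun haT => ?_⟩⟩)
      · rintro rfl
        exact hm_dead (mem_sdiff.1 ha).1
      · exact hab (le_antisymm ((hT_min ha haT).2 b hbT) (hb_min a haT))
    calc #(forgetStep S x \ forgetStep T x) ≤ #((S \ T).erase m) + 1 :=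
          (card_le_card hsub).trans (card_insert_le _ _)
      _ = #(S \ T) := card_erase_add_one hm
  · push Not at hbT
    exact card_le_card fun a ha => mem_sdiff.2 ⟨hS_of_mem ha, hbT a ha⟩

lemma card_forgetStep_sdiff_forgetStep_le_two (S : Finset ℝ) (x y : ℝ) :
    #(forgetStep S x \ forgetStep S y) ≤ 2 := by
  have hsub : forgetStep S x \ forgetStep S y ⊆ insert x {a ∈ S | ∀ z ∈ S, a ≤ z} := by
    intro a ha
    rcases eq_or_ne a x with rfl | hax
    · exact mem_insert_self _ _
    have haS : a ∈ S := mem_of_mem_forgetStep_of_ne (mem_sdiff.1 ha).1 hax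
    exact mem_insert_of_mem
      (mem_filter.2 ⟨haS, ((notMem_forgetStep_iff haS).1 (mem_sdiff.1 ha).2).2⟩)
  have hmin : #{a ∈ S | ∀ z ∈ S, a ≤ z} ≤ 1 := by
    refine card_le_one.2 fun a ha b hb => ?_
    rw [mem_filter] at ha hb
    exact le_antisymm (ha.2 b hb.1) (hb.2 a ha.1)
  exact (card_le_card hsub).trans ((card_insert_le _ _).trans (by omega))

lemma forgetMem_congr (T : Finset ℝ) {xs ys : ℕ → ℝ} {n : ℕ} (h : ∀ i < n, xs i = ys i) :
    forgetMem T xs n = forgetMem T ys n := by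
  induction n with
  | zero => rfl
  | succ n ih => simp only [forgetMem, ih fun i hi => h i (by omega), h n (by omega)]

lemma card_forgetMem_sdiff_forgetMem_le_two (T : Finset ℝ) {xs ys : ℕ → ℝ} {k : ℕ}
    (h : ∀ i ≠ k, xs i = ys i) (n : ℕ) : #(forgetMem T xs n \ forgetMem T ys n) ≤ 2 := by
  induction n with
  | zero => simp [forgetMem]
  | succ n ih =>
    rcases lt_trichotomy n k with hnk | rfl | hkn
    · rw [forgetMem_congr T fun i hi => h i (by omega), Finset.sdiff_self, card_empty]
      omega
    · rw [forgetMem, forgetMem, forgetMem_congr T fun i hi => h i (by omega)]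
      exact card_forgetStep_sdiff_forgetStep_le_two _ _ _
    · rw [forgetMem, forgetMem, h n hkn.ne']
      exact (card_sdiff_forgetStep_le _ _ _).trans ih

lemma sCount_le_sCount_add_two {xs ys : ℕ → ℝ} {k : ℕ} (h : ∀ i ≠ k, xs i = ys i)
    (x : ℝ) (n : ℕ) : sCount xs x n ≤ sCount ys x n + 2 := by
  unfold sCount
  calc #{a ∈ forgetMem {0} xs n | a ≤ x}
      ≤ #({a ∈ forgetMem {0} xs n | a ≤ x} \ {a ∈ forgetMem {0} ys n | a ≤ x})
        + #{a ∈ forgetMem {0} ys n | a ≤ x} := card_le_card_sdiff_add_card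
    _ ≤ 2 + #{a ∈ forgetMem {0} ys n | a ≤ x} := by
        gcongr
        refine (card_le_card fun a => ?_).trans (card_forgetMem_sdiff_forgetMem_le_two {0} h n)
        simp only [mem_sdiff, mem_filter]
        tauto
    _ = _ := add_comm _ _

lemma abs_sCount_sub_sCount_le_two {xs ys : ℕ → ℝ} {k : ℕ} (h : ∀ i ≠ k, xs i = ys i)
    (x : ℝ) (n : ℕ) : |(sCount xs x n : ℝ) - sCount ys x n| ≤ 2 := by
  have h₁ : (sCount xs x n : ℝ) ≤ sCount ys x n + 2 := by
    exact_mod_cast sCount_le_sCount_add_two h x n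
  have h₂ : (sCount ys x n : ℝ) ≤ sCount xs x n + 2 := by
    exact_mod_cast sCount_le_sCount_add_two (fun i hi => (h i hi).symm) x n
  exact abs_sub_le_iff.2 ⟨by linarith, by linarith⟩

lemma forgetMem_subset (T : Finset ℝ) (xs : ℕ → ℝ) (n : ℕ) :
    forgetMem T xs n ⊆ T ∪ (range n).image xs := by
  induction n with
  | zero => simp [forgetMem]
  | succ n ih =>
    intro a ha
    rcases mem_forgetStep_iff.1 ha with rfl | ⟨haM, -⟩
    · exact mem_union_right _ (mem_image_of_mem _ (self_mem_range_succ n))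
    · have := ih haM
      simp only [mem_union, mem_image, mem_range] at this ⊢
      exact this.imp_right fun ⟨i, hi, hia⟩ => ⟨i, by omega, hia⟩

section Measurability

variable {α : Type*} [MeasurableSpace α] {ξ : ℕ → α → ℝ}

lemma measurable_mem_forgetMem (hξ : ∀ i, Measurable (ξ i)) (n : ℕ) {y : α → ℝ}
    (hy : Measurable y) : Measurable fun a => y a ∈ forgetMem {0} (fun i => ξ i a) n := by
  induction n generalizing y with
  | zero => simpa [forgetMem] using measurableSet_eq_fun hy measurable_const
  | succ n ih =>
    have h_exists (a : α) : (∃ z ∈ forgetMem {0} (fun i => ξ i a) n, z < y a) ↔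
        (0 ∈ forgetMem {0} (fun i => ξ i a) n ∧ 0 < y a) ∨
          ∃ i, ξ i a ∈ forgetMem {0} (fun i => ξ i a) n ∧ ξ i a < y a := by
      constructor
      · rintro ⟨z, hzM, hzy⟩
        rcases mem_union.1 (forgetMem_subset _ _ n hzM) with hz | hz
        · rw [mem_singleton.1 hz] at hzM hzy
          exact .inl ⟨hzM, hzy⟩
        · obtain ⟨i, -, rfl⟩ := mem_image.1 hz
          exact .inr ⟨i, hzM, hzy⟩
      · rintro (⟨hM, hy⟩ | ⟨i, hM, hy⟩) <;> exact ⟨_, hM, hy⟩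
    simp only [forgetMem, mem_forgetStep_iff, h_exists]
    have ih_y := ih hy
    have ih_zero := ih (measurable_const (a := (0 : ℝ)))
    have ih_ξ := fun i => ih (hξ i)
    fun_prop

lemma measurable_card_filter_image {ι : Type*} [DecidableEq ι] (s : Finset ι) {g : ι → α → ℝ}
    (hg : ∀ i, Measurable (g i)) (P : α → ℝ → Prop) [∀ a, DecidablePred (P a)]
    (hP : ∀ i, Measurable fun a => P a (g i a)) :
    Measurable fun a => #{z ∈ s.image (g · a) | P a z} := by
  induction s using Finset.induction_on with
  | empty => simp
  | insert i s hi ih =>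
    have h_card (a : α) : #{z ∈ (insert i s).image (g · a) | P a z} =
        #{z ∈ s.image (g · a) | P a z} +
          if P a (g i a) ∧ ¬∃ j : s, g j a = g i a then 1 else 0 := by
      rw [image_insert, filter_insert]
      by_cases hPi : P a (g i a)
      · have hmem : g i a ∈ {z ∈ s.image (g · a) | P a z} ↔ ∃ j : s, g j a = g i a := by
          simp [hPi]
        rw [if_pos hPi, card_insert_eq_ite]
        simp only [hmem, hPi, true_and]
        split_ifs <;> rfl
      · simp [hPi]
    simp only [h_card]
    have h_new : Measurable fun a => P a (g i a) ∧ ¬∃ j : s, g j a = g i a :=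
      (hP i).and (Measurable.exists (p := fun (j : s) a => g j a = g i a) fun j =>
        measurableSet_setOfPred.1 (measurableSet_eq_fun (hg j) (hg i))).not
    exact ih.add (Measurable.ite h_new.setOf measurable_const measurable_const)

lemma measurable_sCount (hξ : ∀ i, Measurable (ξ i)) (x : ℝ) (n : ℕ) :
    Measurable fun a => sCount (fun i => ξ i a) x n := by
  have h_eq (a : α) : sCount (fun i => ξ i a) x n =
      #{z ∈ (insertNone (range n)).image (fun o => o.elim 0 (ξ · a)) |
        z ∈ forgetMem {0} (fun i => ξ i a) n ∧ z ≤ x} := by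
    unfold sCount
    congr 1
    ext z
    simp only [mem_filter, mem_image, mem_insertNone, Option.exists, Option.elim, mem_range]
    refine ⟨fun hz => ⟨?_, hz⟩, And.right⟩
    rcases mem_union.1 (forgetMem_subset _ _ n hz.1) with h0 | hξz
    · exact .inl ⟨by simp, (mem_singleton.1 h0).symm⟩
    · obtain ⟨i, hi, rfl⟩ := mem_image.1 hξz
      exact .inr ⟨i, by simpa using hi, rfl⟩
  have hg (o : Option ℕ) : Measurable fun a => o.elim 0 (ξ · a) := by
    cases o with
    | none => exact measurable_const
    | some i => exact hξ i
  simp only [h_eq]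
  refine measurable_card_filter_image _ hg _ fun o => ?_
  have h_mem := measurable_mem_forgetMem hξ n (hg o)
  have hg_o := hg o
  fun_prop

end Measurability

/-- `s(x, ℓ)` read as a function of the first `ℓ` inputs, the only ones it depends on. -/
noncomputable def sCountFin (x : ℝ) (ℓ : ℕ) (v : Fin ℓ → ℝ) : ℝ :=
  sCount (fun i => if h : i < ℓ then v ⟨i, h⟩ else 0) x ℓ

lemma sCountFin_apply (xs : ℕ → ℝ) (x : ℝ) (ℓ : ℕ) :
    sCountFin x ℓ (fun i => xs i) = sCount xs x ℓ := by
  rw [sCountFin, sCount, sCount, forgetMem_congr {0} (ys := xs) fun i hi => dif_pos hi]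

lemma measurable_sCountFin (x : ℝ) (ℓ : ℕ) : Measurable (sCountFin x ℓ) := by
  refine measurable_from_nat.comp (measurable_sCount (fun i => ?_) x ℓ)
  by_cases hi : i < ℓ
  · simpa [hi] using measurable_pi_apply _
  · simp [hi]

lemma abs_sCountFin_update_sub_le_two (x : ℝ) (ℓ : ℕ) (v : Fin ℓ → ℝ) (k : Fin ℓ) (s : ℝ) :
    |sCountFin x ℓ (Function.update v k s) - sCountFin x ℓ v| ≤ 2 := by
  refine abs_sCount_sub_sCount_le_two (k := k) (fun i hik => ?_) x ℓ
  by_cases hi : i < ℓ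
  · have hne : (⟨i, hi⟩ : Fin ℓ) ≠ k := fun h => hik (by rw [← h])
    simp [hi, Function.update_of_ne hne]
  · simp [hi]

end ForgettingProcess

namespace ProbabilityTheory

section Oscillation

variable {E : Type*} [MeasurableSpace E] {μ : Measure E} [IsProbabilityMeasure μ] {u : E → ℝ}
  {c : ℝ≥0}

lemma integrable_of_abs_sub_le (hu : AEStronglyMeasurable u μ)
    (hosc : ∀ s s', |u s - u s'| ≤ c) : Integrable u μ := by
  obtain ⟨s₀⟩ := nonempty_of_isProbabilityMeasure μ
  refine (integrable_const (|u s₀| + c)).mono' hu (ae_of_all _ fun s => ?_)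
  have := hosc s s₀
  rw [Real.norm_eq_abs]
  linarith [abs_sub_abs_le_abs_sub (u s) (u s₀)]

lemma abs_sub_integral_le_of_abs_sub_le (hu : AEStronglyMeasurable u μ)
    (hosc : ∀ s s', |u s - u s'| ≤ c) (s : E) : |u s - ∫ s', u s' ∂μ| ≤ c := by
  have h_eq : u s - ∫ s', u s' ∂μ = ∫ s', (u s - u s') ∂μ := by
    rw [integral_sub (integrable_const _) (integrable_of_abs_sub_le hu hosc), integral_const,
      probReal_univ, one_smul]
  rw [h_eq]
  simpa using norm_integral_le_of_norm_le_const (μ := μ) (f := fun s' => u s - u s')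
    (ae_of_all _ fun s' => (hosc s s'))

/-- Hoeffding's lemma. -/
lemma hasSubgaussianMGF_sub_integral_of_abs_sub_le (hu : AEMeasurable u μ)
    (hosc : ∀ s s', |u s - u s'| ≤ c) :
    HasSubgaussianMGF (fun s => u s - ∫ s', u s' ∂μ) (c ^ 2) μ := by
  obtain ⟨s₀⟩ := nonempty_of_isProbabilityMeasure μ
  have h := hasSubgaussianMGF_of_mem_Icc (a := u s₀ - c) (b := u s₀ + c) hu
    (ae_of_all _ fun s => by
      have := abs_sub_le_iff.1 (hosc s s₀)
      exact ⟨by linarith [this.2], by linarith [this.1]⟩)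
  convert h using 1
  rw [show u s₀ + c - (u s₀ - c) = ((2 * c : ℝ≥0) : ℝ) by push_cast; ring, NNReal.nnnorm_eq,
    mul_div_cancel_left₀ _ two_ne_zero]

end Oscillation

section Product

variable {E W : Type*} [MeasurableSpace E] [MeasurableSpace W] {μ₁ : Measure E} {μ₂ : Measure W}
  [IsProbabilityMeasure μ₁] [IsProbabilityMeasure μ₂] {F : E × W → ℝ} {c : ℝ≥0}

lemma measurable_sub_integral_fst (hF : Measurable F) :
    Measurable fun p : E × W => F p - ∫ s, F (s, p.2) ∂μ₁ :=
  hF.sub (hF.stronglyMeasurable.integral_prod_left'.measurable.comp measurable_snd)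

lemma abs_sub_integral_fst_le (hF : Measurable F) (hosc : ∀ s s' w, |F (s, w) - F (s', w)| ≤ c)
    (p : E × W) : |F p - ∫ s, F (s, p.2) ∂μ₁| ≤ c :=
  abs_sub_integral_le_of_abs_sub_le (hF.comp measurable_prodMk_right).aestronglyMeasurable
    (hosc · · p.2) p.1

lemma integral_prod_of_abs_sub_le (hF : Measurable F)
    (hosc : ∀ s s' w, |F (s, w) - F (s', w)| ≤ c)
    (hg : Integrable (fun w => ∫ s, F (s, w) ∂μ₁) μ₂) :
    ∫ p, F p ∂(μ₁.prod μ₂) = ∫ w, ∫ s, F (s, w) ∂μ₁ ∂μ₂ := by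
  have h_dev : Integrable (fun p : E × W => F p - ∫ s, F (s, p.2) ∂μ₁) (μ₁.prod μ₂) :=
    (integrable_const (c : ℝ)).mono' (measurable_sub_integral_fst hF).aestronglyMeasurable
      (ae_of_all _ (abs_sub_integral_fst_le hF hosc))
  refine integral_prod_symm F ((h_dev.add (hg.comp_snd μ₁)).congr (ae_of_all _ fun p => ?_))
  exact sub_add_cancel _ _

/-- Writing `F p - ∫ F = (F p - g p.2) + (g p.2 - ∫ g)` with `g` the average of `F` over the first
coordinate, the first summand is conditionally sub-Gaussian by Hoeffding's lemma. -/
lemma hasSubgaussianMGF_prod_sub_integral (hF : Measurable F) {σ : ℝ≥0}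
    (hosc : ∀ s s' w, |F (s, w) - F (s', w)| ≤ c)
    (hg : HasSubgaussianMGF (fun w => ∫ s, F (s, w) ∂μ₁ - ∫ w', ∫ s, F (s, w') ∂μ₁ ∂μ₂) σ μ₂) :
    HasSubgaussianMGF (fun p => F p - ∫ q, F q ∂(μ₁.prod μ₂)) (c ^ 2 + σ) (μ₁.prod μ₂) := by
  set g : W → ℝ := fun w => ∫ s, F (s, w) ∂μ₁
  set I := ∫ w, g w ∂μ₂
  have hg_int : Integrable g μ₂ :=
    (hg.integrable.add (integrable_const I)).congr (ae_of_all _ fun w => sub_add_cancel _ I)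
  rw [integral_prod_of_abs_sub_le hF hosc hg_int]
  have h_split (t : ℝ) (p : E × W) :
      Real.exp (t * (F p - I)) = Real.exp (t * (F p - g p.2)) * Real.exp (t * (g p.2 - I)) := by
    rw [← Real.exp_add]; ring_nf
  have h_int (t : ℝ) : Integrable (fun p => Real.exp (t * (F p - I))) (μ₁.prod μ₂) := by
    simp only [h_split]
    refine ((hg.integrable_exp_mul t).comp_snd μ₁).bdd_mul (c := Real.exp (|t| * c)) ?_ ?_
    · exact (Real.measurable_exp.comp
        ((measurable_sub_integral_fst hF).const_mul t)).aestronglyMeasurable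
    · refine ae_of_all _ fun p => ?_
      rw [Real.norm_eq_abs, Real.abs_exp, Real.exp_le_exp]
      exact (le_abs_self _).trans (abs_mul t _ ▸
        mul_le_mul_of_nonneg_left (abs_sub_integral_fst_le hF hosc p) (abs_nonneg t))
  refine ⟨h_int, fun t => ?_⟩
  calc mgf (fun p => F p - I) (μ₁.prod μ₂) t
      = ∫ w, mgf (fun s => F (s, w) - g w) μ₁ t * Real.exp (t * (g w - I)) ∂μ₂ := by
        rw [mgf, integral_prod_symm _ (h_int t)]
        simp only [h_split, integral_mul_const, mgf]
    _ ≤ ∫ w, Real.exp (c ^ 2 * t ^ 2 / 2) * Real.exp (t * (g w - I)) ∂μ₂ := by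
        refine integral_mono_of_nonneg (ae_of_all _ fun w => mul_nonneg mgf_nonneg (by positivity))
          ((hg.integrable_exp_mul t).const_mul _) (ae_of_all _ fun w => ?_)
        refine mul_le_mul_of_nonneg_right ?_ (by positivity)
        exact_mod_cast (hasSubgaussianMGF_sub_integral_of_abs_sub_le
          (hF.comp measurable_prodMk_right).aemeasurable (hosc · · w)).mgf_le t
    _ = Real.exp (c ^ 2 * t ^ 2 / 2) * mgf (fun w => g w - I) μ₂ t := integral_const_mul _ _
    _ ≤ Real.exp (c ^ 2 * t ^ 2 / 2) * Real.exp (σ * t ^ 2 / 2) := by gcongr; exact hg.mgf_le t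
    _ = Real.exp (↑(c ^ 2 + σ) * t ^ 2 / 2) := by rw [← Real.exp_add]; push_cast; ring_nf

end Product

/-- **McDiarmid's inequality**, in sub-Gaussian form: a function of independent coordinates that
changes by at most `c` when one coordinate is changed is sub-Gaussian with parameter `n c²`. -/
theorem hasSubgaussianMGF_pi_sub_integral {E : Type*} [MeasurableSpace E] {n : ℕ}
    (ν : Fin n → Measure E) [∀ i, IsProbabilityMeasure (ν i)] {f : (Fin n → E) → ℝ}
    (hf : Measurable f) {c : ℝ≥0} (hdiff : ∀ v i s, |f (Function.update v i s) - f v| ≤ c) :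
    HasSubgaussianMGF (fun v => f v - ∫ w, f w ∂Measure.pi ν) (n * c ^ 2) (Measure.pi ν) := by
  induction n with
  | zero =>
    have h_zero (v : Fin 0 → E) : f v - ∫ w, f w ∂Measure.pi ν = 0 := by
      simp [Subsingleton.elim _ v]
    simp [h_zero]
  | succ n ih =>
    set e := MeasurableEquiv.piFinSuccAbove (fun _ : Fin (n + 1) => E) 0
    have he : MeasurePreserving e (Measure.pi ν)
        ((ν 0).prod (Measure.pi fun j => ν (Fin.succAbove 0 j))) :=
      measurePreserving_piFinSuccAbove ν 0
    set F : E × (Fin n → E) → ℝ := fun p => f (Fin.cons p.1 p.2)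
    have hFe (v : Fin (n + 1) → E) : F (e v) = f v := by
      simp [F, e, MeasurableEquiv.piFinSuccAbove_apply, Fin.cons_self_tail]
    have hF : Measurable F := by
      rw [show F = f ∘ e.symm from funext fun p => by rw [Function.comp_apply, ← hFe,
        e.apply_symm_apply]]
      exact hf.comp e.symm.measurable
    have hF_sec (w : Fin n → E) : Measurable fun s => F (s, w) := hF.comp measurable_prodMk_right
    have hosc (s s' : E) (w : Fin n → E) : |F (s, w) - F (s', w)| ≤ c := by
      simpa [F, Fin.update_cons_zero] using hdiff (Fin.cons s' w) 0 s
    have hg_diff (w : Fin n → E) (j : Fin n) (t : E) :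
        |∫ s, F (s, Function.update w j t) ∂ν 0 - ∫ s, F (s, w) ∂ν 0| ≤ c := by
      rw [← integral_sub
        (integrable_of_abs_sub_le (hF_sec _).aestronglyMeasurable (hosc · · _))
        (integrable_of_abs_sub_le (hF_sec w).aestronglyMeasurable (hosc · · w))]
      simpa using norm_integral_le_of_norm_le_const (μ := ν 0)
        (f := fun s => F (s, Function.update w j t) - F (s, w)) (ae_of_all _ fun s => by
        simpa [F, Fin.cons_update] using hdiff (Fin.cons s w) j.succ t)
    have hg := ih (fun j => ν (Fin.succAbove 0 j))
      (hF.stronglyMeasurable.integral_prod_left' (μ := ν 0)).measurable hg_diff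
    have key := hasSubgaussianMGF_prod_sub_integral hF hosc hg
    rw [← he.map_eq] at key
    convert key.of_map e.measurable.aemeasurable using 1
    · funext v
      rw [he.map_eq, ← he.integral_comp' F]
      simp [hFe]
    · push_cast
      ring

lemma HasSubgaussianMGF.measureReal_abs_ge_le {Ω : Type*} [MeasurableSpace Ω] {μ : Measure Ω}
    {X : Ω → ℝ} {c : ℝ≥0} (h : HasSubgaussianMGF X c μ) {ε : ℝ} (hε : 0 ≤ ε) :
    μ.real {ω | ε ≤ |X ω|} ≤ 2 * Real.exp (-ε ^ 2 / (2 * c)) := by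
  have h_union : {ω | ε ≤ |X ω|} = {ω | ε ≤ X ω} ∪ {ω | ε ≤ (-X) ω} := by
    ext ω
    simp [le_abs', le_neg, or_comm]
  rw [h_union]
  refine (measureReal_union_le _ _).trans ?_
  linarith [h.measure_ge_le hε, h.neg.measure_ge_le hε]

/-- **McDiarmid's inequality**. -/
theorem measureReal_abs_sub_integral_ge_le {Ω E : Type*} [MeasurableSpace Ω] [MeasurableSpace E]
    {μ : Measure Ω} [IsProbabilityMeasure μ] {n : ℕ} {Y : Fin n → Ω → E}
    (hY : ∀ i, Measurable (Y i)) (h_indep : iIndepFun Y μ) {f : (Fin n → E) → ℝ}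
    (hf : Measurable f) {c : ℝ≥0} (hdiff : ∀ v i s, |f (Function.update v i s) - f v| ≤ c)
    {ε : ℝ} (hε : 0 ≤ ε) :
    μ.real {ω | ε ≤ |f (fun i => Y i ω) - ∫ ω', f (fun i => Y i ω') ∂μ|} ≤
      2 * Real.exp (-ε ^ 2 / (2 * (n * c ^ 2))) := by
  have : ∀ i, IsProbabilityMeasure (μ.map (Y i)) :=
    fun i => Measure.isProbabilityMeasure_map (hY i).aemeasurable
  have hΦ : Measurable fun ω i => Y i ω := measurable_pi_lambda _ hY
  have h := hasSubgaussianMGF_pi_sub_integral (fun i => μ.map (Y i)) hf hdiff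
  rw [← h_indep.map_fun_eq_pi_map fun i => (hY i).aemeasurable] at h
  have h' := h.of_map hΦ.aemeasurable
  rw [integral_map hΦ.aemeasurable hf.aestronglyMeasurable] at h'
  simpa using h'.measureReal_abs_ge_le hε

end ProbabilityTheory

open ForgettingProcess in
theorem sCount_concentration_general {Ω : Type*} [MeasurableSpace Ω] (μ : Measure Ω)
    [IsProbabilityMeasure μ] (X : ℕ → Ω → ℝ) (hX : IsUnifIID μ X)
    (x : ℝ) (ℓ : ℕ) (hℓ : 1 ≤ ℓ) (lam : ℝ) (hlam : 0 < lam) :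
    μ {ω | lam * Real.sqrt ℓ <
        |(sCount (fun i => X i ω) x ℓ : ℝ) - ∫ ω', (sCount (fun i => X i ω') x ℓ : ℝ) ∂μ|}
      ≤ ENNReal.ofReal (2 * Real.exp (-lam ^ 2 / 8)) := by
  obtain ⟨hX_meas, hX_indep, -⟩ := hX
  have h := measureReal_abs_sub_integral_ge_le (Y := fun i : Fin ℓ => X i) (fun i => hX_meas i)
    (hX_indep.precomp Fin.val_injective) (measurable_sCountFin x ℓ) (c := 2)
    (fun v k s => by exact_mod_cast abs_sCountFin_update_sub_le_two x ℓ v k s)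
    (by positivity : 0 ≤ lam * √ℓ)
  have h_exp : -(lam * √ℓ) ^ 2 / (2 * (ℓ * ((2 : ℝ≥0) : ℝ) ^ 2)) = -lam ^ 2 / 8 := by
    have : (ℓ : ℝ) ≠ 0 := Nat.cast_ne_zero.2 (by omega)
    rw [mul_pow, Real.sq_sqrt (Nat.cast_nonneg ℓ)]
    field_simp
    norm_num
  have h_fin (ω : Ω) : sCountFin x ℓ (fun i => X i ω) = sCount (fun i => X i ω) x ℓ :=
    sCountFin_apply (fun n => X n ω) x ℓ
  simp only [h_fin, h_exp] at h
  calc _ ≤ μ {ω | lam * √ℓ ≤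
          |(sCount (fun i => X i ω) x ℓ : ℝ) - ∫ ω', (sCount (fun i => X i ω') x ℓ : ℝ) ∂μ|} :=
        measure_mono (Set.ofPred_subset_ofPred.2 fun _ hω => hω.le)
    _ ≤ _ := by
        rw [← ofReal_measureReal]
        exact ENNReal.ofReal_le_ofReal h

/-- Concentration of the memory count: for `x ∈ [0,1]`, `ℓ ≥ 1` and
`λ > 0`, the probability that `s(x,ℓ)` deviates from its expectation by more than `λ√ℓ`
is at most `2·exp(−λ²/8)`. -/
theorem sCount_concentration {Ω : Type*} [MeasurableSpace Ω] (μ : Measure Ω)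
    [IsProbabilityMeasure μ] (X : ℕ → Ω → ℝ) (hX : IsUnifIID μ X)
    (x : ℝ) (hx : x ∈ Set.Icc (0 : ℝ) 1) (ℓ : ℕ) (hℓ : 1 ≤ ℓ) (lam : ℝ) (hlam : 0 < lam) :
    μ {ω | lam * Real.sqrt ℓ <
        |(sCount (fun i => X i ω) x ℓ : ℝ) - ∫ ω', (sCount (fun i => X i ω') x ℓ : ℝ) ∂μ|}
      ≤ ENNReal.ofReal (2 * Real.exp (-lam ^ 2 / 8)) :=
  sCount_concentration_general μ X hX x ℓ hℓ lam hlam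
end
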